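/- (Constant Rank theorem, Janin's version with C² curve) Let x* ∈ Ω and d ∈ C(x*), and let E := {j ∈ A(x*) : ∇g_j(x*)ᵀd = 0}. If the family {∇h_i(x), i = 1,…,m; ∇g_j(x), j ∈ E} has constant rank for all x in a neighborhood of x*, then there exist ε > 0 and a twice continuously differentiable curve ξ : (−ε,ε) → ℝⁿ such that ξ(0) = x*, ξ'(0) = d, h_i(ξ(t)) = 0 for all i and g_j(ξ(t)) = 0 for all j ∈ E whenever t ∈ (−ε,ε), and g_j(ξ(t)) ≤ 0 for all j = 1,…,p whenever t ∈ [0,ε). -/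

import Mathlib

open scoped BigOperators Pointwise
open Matrix

attribute [local instance] Classical.propDecidable

noncomputable section

/-- The gradient vector of `φ` at `x` (the vector of partial derivatives). -/
def gradVec {n : ℕ} (φ : (Fin n → ℝ) → ℝ) (x : Fin n → ℝ) : Fin n → ℝ :=
  fun k => fderiv ℝ φ x (Pi.single k 1)

/-- The quadratic form `d ↦ dᵀ ∇²φ(x) d` of the Hessian of `φ` at `x`. -/
def hessQ {n : ℕ} (φ : (Fin n → ℝ) → ℝ) (x d : Fin n → ℝ) : ℝ :=
  iteratedFDeriv ℝ 2 φ x ![d, d]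

/-- Feasibility for the problem (NLP). -/
def Feas {n m p : ℕ} (h : Fin m → (Fin n → ℝ) → ℝ) (g : Fin p → (Fin n → ℝ) → ℝ)
    (x : Fin n → ℝ) : Prop :=
  (∀ i, h i x = 0) ∧ ∀ j, g j x ≤ 0

/-- The Lagrangian of (NLP). -/
def Lagr {n m p : ℕ} (f : (Fin n → ℝ) → ℝ) (h : Fin m → (Fin n → ℝ) → ℝ)
    (g : Fin p → (Fin n → ℝ) → ℝ) (lam : Fin m → ℝ) (mu : Fin p → ℝ) (x : Fin n → ℝ) : ℝ :=
  f x + ∑ i, lam i * h i x + ∑ j, mu j * g j x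

/-- `(lam, mu)` is a Lagrange multiplier at `xs`, i.e. `(lam, mu) ∈ Λ(xs)`. -/
def IsLagMult {n m p : ℕ} (f : (Fin n → ℝ) → ℝ) (h : Fin m → (Fin n → ℝ) → ℝ)
    (g : Fin p → (Fin n → ℝ) → ℝ) (xs : Fin n → ℝ) (lam : Fin m → ℝ) (mu : Fin p → ℝ) : Prop :=
  (∀ j, 0 ≤ mu j) ∧ fderiv ℝ (Lagr f h g lam mu) xs = 0 ∧ ∀ j, mu j * g j xs = 0

/-- The Mangasarian-Fromovitz constraint qualification at `xs`. -/
def MFCQ {n m p : ℕ} (h : Fin m → (Fin n → ℝ) → ℝ) (g : Fin p → (Fin n → ℝ) → ℝ)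
    (xs : Fin n → ℝ) : Prop :=
  LinearIndependent ℝ (fun i : Fin m => fderiv ℝ (h i) xs) ∧
  ∃ d : Fin n → ℝ, (∀ i, fderiv ℝ (h i) xs d = 0) ∧
    ∀ j, g j xs = 0 → fderiv ℝ (g j) xs d < 0

/-- Membership in the critical cone `C(xs)`. -/
def critCone {n m p : ℕ} (f : (Fin n → ℝ) → ℝ) (h : Fin m → (Fin n → ℝ) → ℝ)
    (g : Fin p → (Fin n → ℝ) → ℝ) (xs d : Fin n → ℝ) : Prop :=
  fderiv ℝ f xs d = 0 ∧ (∀ i, fderiv ℝ (h i) xs d = 0) ∧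
    ∀ j, g j xs = 0 → fderiv ℝ (g j) xs d ≤ 0

/-- Membership in the critical subspace `S(xs)`. -/
def critSub {n m p : ℕ} (h : Fin m → (Fin n → ℝ) → ℝ) (g : Fin p → (Fin n → ℝ) → ℝ)
    (xs d : Fin n → ℝ) : Prop :=
  (∀ i, fderiv ℝ (h i) xs d = 0) ∧ ∀ j, g j xs = 0 → fderiv ℝ (g j) xs d = 0

/-- The Jacobian matrix `J(x)` of equality and active inequality constraints
(activity taken at the base point `xs`). -/
def Jac {n m p : ℕ} (h : Fin m → (Fin n → ℝ) → ℝ) (g : Fin p → (Fin n → ℝ) → ℝ)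
    (xs x : Fin n → ℝ) : Matrix (Fin m ⊕ {j : Fin p // g j xs = 0}) (Fin n) ℝ :=
  Matrix.of fun i k =>
    Sum.elim (fun i' => fderiv ℝ (h i') x (Pi.single k 1))
      (fun j' => fderiv ℝ (g j'.1) x (Pi.single k 1)) i

/-- A first-order cone: the (direct) sum of a linear subspace and a ray. -/
def IsFirstOrderCone {n : ℕ} (K : Set (Fin n → ℝ)) : Prop :=
  ∃ (W : Submodule ℝ (Fin n → ℝ)) (d0 : Fin n → ℝ),
    K = {x | ∃ w ∈ W, ∃ r : ℝ, 0 ≤ r ∧ x = w + r • d0}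

/-- The rank of a family of vectors: the dimension of its linear span. -/
def famRank {ι : Type*} {n : ℕ} (v : ι → (Fin n → ℝ)) : ℕ :=
  Module.finrank ℝ (Submodule.span ℝ (Set.range v))

/-!
Write `c` for the constraints that must stay active along the curve: the equalities and the
inequalities indexed by `E`. By constant rank, a subfamily `S` of gradients that is a basis of the span at
`xs` stays linearly independent and keeps spanning all the gradients near `xs`. The implicit
function theorem applied to `c_S` (whose derivative is onto) gives a `C²` curve through `xs` with
velocity `d` on which `c_S` vanishes. Along it, `(c_i ∘ ξ)'(t)` is a combination of the
`(c_w ∘ ξ)'(t) = 0`, `w ∈ S`, so every `c_i` vanishes as well. The remaining inequalities are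
either inactive at `xs` or have `∇g_j(xs)ᵀd < 0`, so they stay nonpositive for small `t ≥ 0`.
-/

open Filter Topology Set Submodule Module

theorem finrank_span_image_of_linearIndepOn {K V ι : Type*} [DivisionRing K] [AddCommGroup V]
    [Module K V] [Finite ι] {v : ι → V} {S : Set ι} (h : LinearIndepOn K v S) :
    finrank K (span K (v '' S)) = Nat.card S := by
  have := Fintype.ofFinite S
  rw [image_eq_range, finrank_span_eq_card h, Nat.card_eq_fintype_card]

theorem ContinuousLinearMap.pi_surjective_of_linearIndependent {𝕜 E ι : Type*}
    [NontriviallyNormedField 𝕜] [AddCommGroup E] [Module 𝕜 E] [TopologicalSpace E] [Finite ι]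
    {ℓ : ι → E →L[𝕜] 𝕜} (hℓ : LinearIndependent 𝕜 ℓ) :
    Function.Surjective (ContinuousLinearMap.pi ℓ) := by
  have hfun : LinearIndependent 𝕜 (fun i => ⇑(ℓ i)) :=
    hℓ.map' (LinearMap.ltoFun 𝕜 E 𝕜 𝕜 ∘ₗ ContinuousLinearMap.coeLM 𝕜) <|
      LinearMap.ker_eq_bot.mpr fun _ _ h => ContinuousLinearMap.coe_injective (by simpa using h)
  intro y
  have hy : y ∈ span 𝕜 (Set.range fun x i => ℓ i x) :=
    (span_flip_eq_top_iff_linearIndependent.mpr hfun) ▸ mem_top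
  rw [show (Set.range fun x i => ℓ i x) = LinearMap.range (pi ℓ : E →ₗ[𝕜] ι → 𝕜) from
    (LinearMap.coe_range (pi ℓ : E →ₗ[𝕜] ι → 𝕜)).symm, span_eq] at hy
  exact hy

theorem ContinuousLinearMap.apply_eq_zero_of_mem_span {𝕜 E F ι : Type*}
    [NontriviallyNormedField 𝕜] [NormedAddCommGroup E] [NormedSpace 𝕜 E]
    [NormedAddCommGroup F] [NormedSpace 𝕜 F] {L : ι → E →L[𝕜] F} {S : Set ι} {ℓ : E →L[𝕜] F}
    {u : E} (hℓ : ℓ ∈ span 𝕜 (L '' S)) (hL : ∀ i ∈ S, L i u = 0) : ℓ u = 0 := by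
  have hker : span 𝕜 (L '' S) ≤ LinearMap.ker (ContinuousLinearMap.apply 𝕜 F u).toLinearMap :=
    span_le.mpr <| by rintro _ ⟨i, hi, rfl⟩; exact hL i hi
  exact hker hℓ

theorem exists_linearIndepOn_eventually_span_eq {𝕜 V X ι : Type*} [NontriviallyNormedField 𝕜]
    [CompleteSpace 𝕜] [NormedAddCommGroup V] [NormedSpace 𝕜 V] [FiniteDimensional 𝕜 V]
    [TopologicalSpace X] [Finite ι] {v : X → ι → V} {x₀ : X} (hv : ContinuousAt v x₀)
    (hrank : ∀ᶠ x in 𝓝 x₀,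
      finrank 𝕜 (span 𝕜 (range (v x))) = finrank 𝕜 (span 𝕜 (range (v x₀)))) :
    ∃ S : Set ι, LinearIndepOn 𝕜 (v x₀) S ∧
      ∀ᶠ x in 𝓝 x₀, span 𝕜 (v x '' S) = span 𝕜 (range (v x)) := by
  obtain ⟨S, -, -, hspan, hind⟩ :=
    exists_linearIndepOn_extension (linearIndepOn_empty 𝕜 (v x₀)) (subset_univ _)
  have hspan₀ : span 𝕜 (v x₀ '' S) = span 𝕜 (range (v x₀)) :=
    le_antisymm (span_mono (image_subset_range _ _)) (span_le.mpr (image_univ ▸ hspan))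
  have hind_near : ∀ᶠ x in 𝓝 x₀, LinearIndepOn 𝕜 (v x) S :=
    ((continuous_pi fun i : S => continuous_apply i.1).continuousAt.comp hv).eventually
      hind.linearIndependent.eventually
  refine ⟨S, hind, ?_⟩
  filter_upwards [hrank, hind_near] with x hx hxind
  refine eq_of_le_of_finrank_le (span_mono (image_subset_range _ _)) ?_
  rw [hx, ← hspan₀, finrank_span_image_of_linearIndepOn hind,
    finrank_span_image_of_linearIndepOn hxind]

theorem eventually_eq_of_eventually_hasDerivAt_zero {F : Type*} [NormedAddCommGroup F]
    [NormedSpace ℝ F] {f : ℝ → F} {a : ℝ} (h : ∀ᶠ t in 𝓝 a, HasDerivAt f 0 t) :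
    ∀ᶠ t in 𝓝 a, f t = f a := by
  obtain ⟨r, hr, hball⟩ := Metric.eventually_nhds_iff_ball.mp h
  filter_upwards [Metric.ball_mem_nhds a hr] with t ht
  exact Metric.isOpen_ball.is_const_of_deriv_eq_zero (convex_ball a r).isPreconnected
    (fun s hs => (hball s hs).differentiableAt.differentiableWithinAt)
    (fun s hs => (hball s hs).deriv) ht (Metric.mem_ball_self hr)

theorem HasDerivAt.eventually_lt_of_neg {f : ℝ → ℝ} {f' x : ℝ} (hf : HasDerivAt f f' x)
    (hf' : f' < 0) : ∀ᶠ t in 𝓝[>] x, f t < f x := by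
  filter_upwards [hf.hasDerivWithinAt.limsup_slope_le' (lt_irrefl x) hf',
    self_mem_nhdsWithin] with t hslope (ht : x < t)
  rw [slope_def_field, div_neg_iff] at hslope
  rcases hslope with ⟨-, hneg⟩ | ⟨hlt, -⟩ <;> linarith

theorem exists_pos_forall_Ioo_and_Ico {P Q : ℝ → Prop} (hP : ∀ᶠ t in 𝓝 0, P t)
    (hQ : ∀ᶠ t in 𝓝[≥] 0, Q t) :
    ∃ ε > 0, (∀ t ∈ Ioo (-ε) ε, P t) ∧ ∀ t ∈ Ico 0 ε, Q t := by
  obtain ⟨a, ha, hPa⟩ := Metric.eventually_nhds_iff_ball.mp hP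
  obtain ⟨b, hb, hQb⟩ := mem_nhdsGE_iff_exists_Ico_subset.mp hQ
  refine ⟨min a b, lt_min ha hb, fun t ht => hPa t ?_, fun t ht => hQb ⟨ht.1, ?_⟩⟩
  · rw [Real.ball_eq_Ioo, zero_sub, zero_add]
    exact ⟨(neg_le_neg (min_le_left a b)).trans_lt ht.1, ht.2.trans_le (min_le_left a b)⟩
  · exact ht.2.trans_le (min_le_right a b)

section Curves

variable {E : Type*} [NormedAddCommGroup E] [NormedSpace ℝ E]

theorem exists_curve_of_fderiv_surjective {F : Type*} [NormedAddCommGroup F] [NormedSpace ℝ F]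
    [FiniteDimensional ℝ F] {c : E → F} {x₀ d : E} {k : WithTop ℕ∞}
    (hc : ContDiffAt ℝ k c x₀) (hk : k ≠ 0) (hsurj : Function.Surjective (fderiv ℝ c x₀))
    (hd : fderiv ℝ c x₀ d = 0) :
    ∃ ξ : ℝ → E, ContDiffAt ℝ k ξ 0 ∧ ξ 0 = x₀ ∧ HasDerivAt ξ d 0 ∧
      ∀ᶠ t in 𝓝 0, c (ξ t) = c x₀ := by
  have := FiniteDimensional.complete ℝ F
  set A := fderiv ℝ c x₀
  obtain ⟨R, hAR⟩ : ∃ R : F →L[ℝ] E, A ∘L R = .id ℝ F := by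
    obtain ⟨R, hR⟩ := (A : E →ₗ[ℝ] F).exists_rightInverse_of_surjective
      (LinearMap.range_eq_top.mpr hsurj)
    exact ⟨LinearMap.toContinuousLinearMap R, ContinuousLinearMap.coe_injective hR⟩
  -- look for the curve as `t ↦ x₀ + t • d + R (y t)` and solve `c (x₀ + t • d + R y) = 0` for `y`
  set L : ℝ × F →L[ℝ] E := (ContinuousLinearMap.fst ℝ ℝ F).smulRight d + R ∘L .snd ℝ ℝ F
  have hL : ∀ p, L p = p.1 • d + R p.2 := fun p => rfl
  set Φ : ℝ × F → F := fun p => c (x₀ + L p)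
  have hΦ : ContDiffAt ℝ k Φ 0 := by
    refine ContDiffAt.comp (g := c) 0 ?_ (contDiffAt_const.add L.contDiff.contDiffAt)
    simpa using hc
  have hΦ' : fderiv ℝ Φ 0 = A ∘L L := by
    have hc' : HasFDerivAt c A (x₀ + L 0) := by
      simpa using (hc.differentiableAt hk).hasFDerivAt
    exact (hc'.comp 0 (L.hasFDerivAt.const_add x₀)).fderiv
  have hinv : (fderiv ℝ Φ 0 ∘L .inr ℝ ℝ F).IsInvertible := by
    have : A ∘L L ∘L .inr ℝ ℝ F = .id ℝ F := by
      ext y; simpa [hL] using congrArg (· y) hAR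
    rw [hΦ', ContinuousLinearMap.comp_assoc, this]
    exact ContinuousLinearMap.isInvertible_equiv (f := ContinuousLinearEquiv.refl ℝ F)
  set y := hΦ.implicitFunction hk hinv
  have hy₀ : y 0 = 0 := hΦ.implicitFunction_apply_self hk hinv
  have hy' : HasFDerivAt y (0 : ℝ →L[ℝ] F) 0 := by
    have h := (hΦ.hasStrictFDerivAt_implicitFunction hk hinv).hasFDerivAt
    have : fderiv ℝ Φ 0 ∘L .inl ℝ ℝ F = 0 := by
      ext; simp [hΦ', hL, A, hd]
    rwa [this, ContinuousLinearMap.comp_zero, neg_zero] at h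
  refine ⟨fun t => x₀ + L (t, y t), ?_, ?_, ?_, ?_⟩
  · exact contDiffAt_const.add (L.contDiff.contDiffAt.comp 0
      (contDiffAt_id.prodMk (hΦ.contDiffAt_implicitFunction hk hinv)))
  · simp [hy₀, hL]
  · have hpair : HasDerivAt (fun t => (t, y t)) ((1 : ℝ), (0 : F)) 0 :=
      (hasDerivAt_id 0).prodMk (by simpa using hy'.hasDerivAt)
    simpa [hL] using (L.hasFDerivAt.comp_hasDerivAt 0 hpair).const_add x₀
  · filter_upwards [hΦ.eventually_apply_implicitFunction hk hinv] with t ht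
    simpa [Φ] using ht

theorem eventually_forall_eq_zero_of_mem_span {ι : Type*} [Finite ι] {c : ι → E → ℝ}
    (hc : ∀ i, Differentiable ℝ (c i)) {S : Set ι} {ξ : ℝ → E}
    (hξ : ∀ᶠ t in 𝓝 0, DifferentiableAt ℝ ξ t) (hS : ∀ᶠ t in 𝓝 0, ∀ w ∈ S, c w (ξ t) = 0)
    (hspan : ∀ᶠ t in 𝓝 0, ∀ i,
      fderiv ℝ (c i) (ξ t) ∈ span ℝ ((fun w => fderiv ℝ (c w) (ξ t)) '' S))
    (h₀ : ∀ i, c i (ξ 0) = 0) :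
    ∀ᶠ t in 𝓝 0, ∀ i, c i (ξ t) = 0 := by
  have hderiv : ∀ᶠ t in 𝓝 0, ∀ i, HasDerivAt (fun s => c i (ξ s)) 0 t := by
    filter_upwards [hξ, hS.eventually_nhds, hspan] with t hξt hSt hspant i
    have hchain : ∀ j, HasDerivAt (fun s => c j (ξ s)) (fderiv ℝ (c j) (ξ t) (deriv ξ t)) t :=
      fun j => (hc j _).hasFDerivAt.comp_hasDerivAt t hξt.hasDerivAt
    have hSt' : ∀ w ∈ S, fderiv ℝ (c w) (ξ t) (deriv ξ t) = 0 := fun w hw =>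
      (hchain w).unique <| (hasDerivAt_const t 0).congr_of_eventuallyEq <|
        hSt.mono fun s hs => hs w hw
    simpa [ContinuousLinearMap.apply_eq_zero_of_mem_span (hspant i) hSt'] using hchain i
  rw [eventually_all] at hderiv ⊢
  exact fun i => (eventually_eq_of_eventually_hasDerivAt_zero (hderiv i)).mono fun t ht =>
    ht.trans (h₀ i)

theorem exists_curve_of_finrank_span_fderiv_eventually_eq [FiniteDimensional ℝ E] {ι : Type*}
    [Finite ι] {c : ι → E → ℝ} {k : WithTop ℕ∞} (hc : ∀ i, ContDiff ℝ k (c i)) (hk : 1 ≤ k)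
    {x₀ d : E} (hc₀ : ∀ i, c i x₀ = 0) (hd : ∀ i, fderiv ℝ (c i) x₀ d = 0)
    (hrank : ∀ᶠ x in 𝓝 x₀, finrank ℝ (span ℝ (range fun i => fderiv ℝ (c i) x)) =
      finrank ℝ (span ℝ (range fun i => fderiv ℝ (c i) x₀))) :
    ∃ ξ : ℝ → E, ContDiffAt ℝ k ξ 0 ∧ ξ 0 = x₀ ∧ HasDerivAt ξ d 0 ∧
      ∀ᶠ t in 𝓝 0, ∀ i, c i (ξ t) = 0 := by
  have hk₀ : k ≠ 0 := (zero_lt_one.trans_le hk).ne'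
  obtain ⟨S, hSind, hSspan⟩ := exists_linearIndepOn_eventually_span_eq
    (continuous_pi fun i => (hc i).continuous_fderiv hk₀).continuousAt hrank
  have := Fintype.ofFinite S
  set cS : E → S → ℝ := fun x w => c w x
  have hcS' : fderiv ℝ cS x₀ = ContinuousLinearMap.pi fun w : S => fderiv ℝ (c w) x₀ :=
    fderiv_pi fun w => (hc w).differentiable hk₀ x₀
  obtain ⟨ξ, hξ, hξ₀, hξd, hξS⟩ := exists_curve_of_fderiv_surjective (c := cS)
    (contDiff_pi.mpr fun w : S => hc w : ContDiff ℝ k cS).contDiffAt hk₀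
    (hcS' ▸ ContinuousLinearMap.pi_surjective_of_linearIndependent hSind)
    (by rw [hcS']; ext w; exact hd w)
  refine ⟨ξ, hξ, hξ₀, hξd, eventually_forall_eq_zero_of_mem_span
    (fun i => (hc i).differentiable hk₀) (S := S) ?_ ?_ ?_ (by simp [hξ₀, hc₀])⟩
  · exact ((hξ.of_le hk).eventually (by simp)).mono fun t ht => ht.differentiableAt one_ne_zero
  · exact hξS.mono fun t ht w hw => by simpa [cS, hc₀] using congrFun ht ⟨w, hw⟩
  · have hξ_tendsto : Tendsto ξ (𝓝 0) (𝓝 x₀) := hξ₀ ▸ hξ.continuousAt.tendsto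
    exact (hξ_tendsto.eventually hSspan).mono fun t ht i => ht ▸ subset_span ⟨i, rfl⟩

theorem eventually_nonpos_comp_of_fderiv_neg {φ : E → ℝ} {ξ : ℝ → E} {d : E}
    (hφ : DifferentiableAt ℝ φ (ξ 0)) (hξ : HasDerivAt ξ d 0) (hle : φ (ξ 0) ≤ 0)
    (hd : φ (ξ 0) = 0 → fderiv ℝ φ (ξ 0) d < 0) :
    ∀ᶠ t in 𝓝[≥] 0, φ (ξ t) ≤ 0 := by
  rcases hle.lt_or_eq with hneg | hzero
  · exact nhdsWithin_le_nhds <| ((hφ.continuousAt.comp hξ.continuousAt).eventually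
      (gt_mem_nhds hneg)).mono fun t ht => ht.le
  · rw [← Ioi_insert]
    refine mem_nhdsWithin_insert.mpr ⟨hzero.le, ?_⟩
    exact ((hφ.hasFDerivAt.comp_hasDerivAt 0 hξ).eventually_lt_of_neg (hd hzero)).mono
      fun t ht => (ht.trans_eq hzero).le

end Curves

theorem famRank_gradVec {ι : Type*} {n : ℕ} (φ : ι → (Fin n → ℝ) → ℝ) (x : Fin n → ℝ) :
    famRank (fun i => gradVec (φ i) x) =
      finrank ℝ (span ℝ (range fun i => fderiv ℝ (φ i) x)) := by
  let e : ((Fin n → ℝ) →L[ℝ] ℝ) →ₗ[ℝ] (Fin n → ℝ) :=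
    { toFun := fun L k => L (Pi.single k 1), map_add' := fun _ _ => rfl,
      map_smul' := fun _ _ => rfl }
  have he : Function.Injective e := fun L L' h => ContinuousLinearMap.coe_injective <|
    (Pi.basisFun ℝ (Fin n)).ext fun k => by rw [Pi.basisFun_apply]; exact congrFun h k
  rw [famRank, show (fun i => gradVec (φ i) x) = e ∘ fun i => fderiv ℝ (φ i) x from rfl,
    range_comp, ← map_span]
  exact (equivMapOfInjective e he _).finrank_eq.symm

theorem stmt6 {n m p : ℕ} (f : (Fin n → ℝ) → ℝ) (h : Fin m → (Fin n → ℝ) → ℝ)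
    (g : Fin p → (Fin n → ℝ) → ℝ)
    (hh : ∀ i, ContDiff ℝ 2 (h i)) (hg : ∀ j, ContDiff ℝ 2 (g j))
    (xs : Fin n → ℝ) (hfeas : Feas h g xs)
    (d : Fin n → ℝ) (hd : critCone f h g xs d)
    (hrank : ∃ U ∈ nhds xs, ∀ x ∈ U,
      famRank (Sum.elim (fun i : Fin m => gradVec (h i) x)
        (fun j : {j : Fin p // g j xs = 0 ∧ fderiv ℝ (g j) xs d = 0} => gradVec (g j.1) x)) =
      famRank (Sum.elim (fun i : Fin m => gradVec (h i) xs)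
        (fun j : {j : Fin p // g j xs = 0 ∧ fderiv ℝ (g j) xs d = 0} => gradVec (g j.1) xs))) :
    ∃ ε > (0 : ℝ), ∃ ξ : ℝ → (Fin n → ℝ),
      ContDiffOn ℝ 2 ξ (Set.Ioo (-ε) ε) ∧ ξ 0 = xs ∧ deriv ξ 0 = d ∧
      (∀ t ∈ Set.Ioo (-ε) ε, (∀ i, h i (ξ t) = 0) ∧
        ∀ j : Fin p, g j xs = 0 → fderiv ℝ (g j) xs d = 0 → g j (ξ t) = 0) ∧
      (∀ t ∈ Set.Ico (0 : ℝ) ε, ∀ j, g j (ξ t) ≤ 0) := by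
  obtain ⟨hh₀, hg_nonpos⟩ := hfeas
  obtain ⟨-, hdh, hdg⟩ := hd
  obtain ⟨U, hU, hUrank⟩ := hrank
  let c : Fin m ⊕ {j : Fin p // g j xs = 0 ∧ fderiv ℝ (g j) xs d = 0} → (Fin n → ℝ) → ℝ :=
    Sum.elim h fun j => g j.1
  have hrank_c : ∀ x ∈ U, finrank ℝ (span ℝ (range fun i => fderiv ℝ (c i) x)) =
      finrank ℝ (span ℝ (range fun i => fderiv ℝ (c i) xs)) := fun x hx => by
    have hgrad : ∀ y, (fun i => gradVec (c i) y) =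
        Sum.elim (fun i => gradVec (h i) y) fun j => gradVec (g j.1) y :=
      fun y => funext <| Sum.rec (fun _ => rfl) fun _ => rfl
    rw [← famRank_gradVec, ← famRank_gradVec, hgrad, hgrad]
    exact hUrank x hx
  obtain ⟨ξ, hξ, hξ₀, hξd, hξc⟩ := exists_curve_of_finrank_span_fderiv_eventually_eq (c := c)
    (Sum.rec hh fun j => hg j.1) one_le_two (Sum.rec hh₀ fun j => j.2.1)
    (Sum.rec hdh fun j => j.2.2) (eventually_of_mem hU hrank_c)
  have hineq : ∀ᶠ t in 𝓝[≥] 0, ∀ j, g j (ξ t) ≤ 0 := by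
    refine eventually_all.mpr fun j => ?_
    by_cases hj : g j xs = 0 ∧ fderiv ℝ (g j) xs d = 0
    · exact nhdsWithin_le_nhds (hξc.mono fun t ht => (ht (.inr ⟨j, hj⟩)).le)
    · refine eventually_nonpos_comp_of_fderiv_neg ((hg j).differentiable two_ne_zero _) hξd
        (hξ₀ ▸ hg_nonpos j) fun hj₀ => ?_
      rw [hξ₀] at hj₀ ⊢
      exact (hdg j hj₀).lt_of_ne fun hj₁ => hj ⟨hj₀, hj₁⟩
  obtain ⟨ε, hε, hsymm, hright⟩ :=
    exists_pos_forall_Ioo_and_Ico ((hξ.eventually (by simp)).and hξc) hineq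
  refine ⟨ε, hε, ξ, fun t ht => (hsymm t ht).1.contDiffWithinAt, hξ₀, hξd.deriv,
    fun t ht => ⟨fun i => (hsymm t ht).2 (.inl i),
      fun j hj hjd => (hsymm t ht).2 (.inr ⟨j, hj, hjd⟩)⟩, hright⟩
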